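/- arXiv:1808.10167 — 2 statements merged into one kernel-verified Lean document; each statement's English description precedes it below -/
import Mathlib

section
/- With f_y as above (f_y^{μν}(x) = (1/2) ∫₀¹ (y^ν h^μ(x - u y) - y^μ h^ν(x - u y)) du, for h smooth, compactly supported, divergence-free), one has the identity -2 ∂_ν f_y^{νμ}(x) = h^μ(x) - h^μ(x - y) for all x ∈ ℝ⁴, i.e. f_y is a co-primitive of h - h_y. -/
open MeasureTheory intervalIntegral

/-- The field `f_y^{μν}(x) = (1/2)∫₀¹ (y^ν h^μ(x-uy) - y^μ h^ν(x-uy)) du` is a co-primitive of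
`h - h_y`: one has `-2 ∂_ν f_y^{νμ}(x) = h^μ(x) - h^μ(x-y)` for all `x`. -/
theorem stmt_2
    (h : (Fin 4 → ℝ) → (Fin 4 → ℝ))
    (hsm : ContDiff ℝ (⊤ : ℕ∞) h) (hcs : HasCompactSupport h)
    (hdiv : ∀ x : Fin 4 → ℝ,
      ∑ μ : Fin 4, fderiv ℝ (fun z => h z μ) x (Pi.single μ 1) = 0)
    (y : Fin 4 → ℝ)
    (f : (Fin 4 → ℝ) → Fin 4 → Fin 4 → ℝ)
    (hf : ∀ x μ ν, f x μ ν =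
      (1/2) * ∫ u in (0:ℝ)..1, (y ν * h (x - u • y) μ - y μ * h (x - u • y) ν)) :
    ∀ (x : Fin 4 → ℝ) (μ : Fin 4),
      (-2) * ∑ ν : Fin 4, fderiv ℝ (fun z => f z ν μ) x (Pi.single ν 1)
        = h x μ - h (x - y) μ := by
  classical
  intro x μ
  have hd : Differentiable ℝ h := hsm.differentiable (by simp)
  have hcont : Continuous h := hsm.continuous
  obtain ⟨K, hK⟩ := ContDiff.lipschitzWith_of_hasCompactSupport hcs hsm (by simp)
  -- continuity helpers
  have haff : Continuous fun t : ℝ => x - t • y :=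
    continuous_const.sub (continuous_id.smul continuous_const)
  have contD : Continuous fun t : ℝ => fderiv ℝ h (x - t • y) :=
    (hsm.continuous_fderiv (by simp)).comp haff
  have contDv : ∀ v : (Fin 4 → ℝ), Continuous fun t : ℝ => fderiv ℝ h (x - t • y) v := fun v =>
    (ContinuousLinearMap.apply ℝ (Fin 4 → ℝ) v).continuous.comp contD
  have contDvi : ∀ (v : (Fin 4 → ℝ)) (i : Fin 4),
      Continuous fun t : ℝ => fderiv ℝ h (x - t • y) v i := fun v i =>
    (continuous_apply i).comp (contDv v)
  -- differentiation under the integral sign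
  have key : ∀ t : ℝ, HasFDerivAt (fun x' : (Fin 4 → ℝ) => h (x' - t • y))
      (fderiv ℝ h (x - t • y)) x := by
    intro t
    have h1 : HasFDerivAt (fun x' : (Fin 4 → ℝ) => x' - t • y) (ContinuousLinearMap.id ℝ (Fin 4 → ℝ)) x :=
      (hasFDerivAt_id x).sub_const (t • y)
    simpa using (hd (x - t • y)).hasFDerivAt.comp x h1
  have main := hasFDerivAt_integral_of_dominated_loc_of_lip_interval
      (μ := volume) (F := fun (x' : (Fin 4 → ℝ)) (t : ℝ) => h (x' - t • y))
      (F' := fun t : ℝ => fderiv ℝ h (x - t • y)) (a := 0) (b := 1)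
      (bound := fun _ => (K : ℝ)) (x₀ := x) (Metric.ball_mem_nhds x one_pos)
      (Filter.Eventually.of_forall fun x' =>
        ((hcont.comp (continuous_const.sub (continuous_id.smul continuous_const))).aestronglyMeasurable))
      ((hcont.comp haff).intervalIntegrable 0 1)
      contD.aestronglyMeasurable
      (ae_of_all _ fun t => by
        have : LipschitzWith K fun x' : (Fin 4 → ℝ) => h (x' - t • y) := by
          intro a b
          have : edist (a - t • y) (b - t • y) = edist a b := by
            simp [edist_sub_right]
          simpa [this] using hK (a - t • y) (b - t • y)
        simpa [Real.nnabs_coe] using this.lipschitzOnWith)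
      (intervalIntegrable_const)
      (ae_of_all _ fun t => key t)
  have hDint : IntervalIntegrable (fun t : ℝ => fderiv ℝ h (x - t • y)) volume 0 1 := main.1
  have hG : HasFDerivAt (fun x' : (Fin 4 → ℝ) => ∫ t in (0:ℝ)..1, h (x' - t • y))
      (∫ t in (0:ℝ)..1, fderiv ℝ h (x - t • y)) x := main.2
  set D : (Fin 4 → ℝ) →L[ℝ] (Fin 4 → ℝ) := ∫ t in (0:ℝ)..1, fderiv ℝ h (x - t • y) with hD
  -- component projection commutes with fderiv
  have comp : ∀ (z : (Fin 4 → ℝ)) (ν : Fin 4) (v : (Fin 4 → ℝ)),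
      fderiv ℝ (fun z => h z ν) z v = fderiv ℝ h z v ν := by
    intro z ν v
    have : HasFDerivAt (fun z : (Fin 4 → ℝ) => h z ν)
        ((ContinuousLinearMap.proj (R := ℝ) (φ := fun _ : Fin 4 => ℝ) ν).comp (fderiv ℝ h z)) z :=
      (ContinuousLinearMap.proj (R := ℝ) (φ := fun _ : Fin 4 => ℝ) ν).hasFDerivAt.comp z (hd z).hasFDerivAt
    rw [this.fderiv]; rfl
  -- the derivative of each component of f
  have term : ∀ ν : Fin 4, fderiv ℝ (fun z => f z ν μ) x (Pi.single ν 1)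
      = (1/2) * (y μ * (∫ t in (0:ℝ)..1, fderiv ℝ h (x - t • y) (Pi.single ν 1) ν)
               - y ν * (∫ t in (0:ℝ)..1, fderiv ℝ h (x - t • y) (Pi.single ν 1) μ)) := by
    intro ν
    set L : (Fin 4 → ℝ) →L[ℝ] ℝ :=
      ((1/2) * y μ) • ContinuousLinearMap.proj ν - ((1/2) * y ν) • ContinuousLinearMap.proj μ
      with hL
    have hfL : (fun z => f z ν μ) = fun z => L (∫ t in (0:ℝ)..1, h (z - t • y)) := by
      funext z
      have hint : ∀ i : Fin 4,
          IntervalIntegrable (fun t : ℝ => h (z - t • y) i) volume 0 1 := fun i =>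
        ((continuous_apply i).comp
          (hcont.comp (continuous_const.sub (continuous_id.smul continuous_const)))).intervalIntegrable 0 1
      have hvint : IntervalIntegrable (fun t : ℝ => h (z - t • y)) volume 0 1 :=
        (hcont.comp (continuous_const.sub (continuous_id.smul continuous_const))).intervalIntegrable 0 1
      have hproj : ∀ i : Fin 4,
          (∫ t in (0:ℝ)..1, h (z - t • y)) i = ∫ t in (0:ℝ)..1, h (z - t • y) i := fun i =>
        ((ContinuousLinearMap.proj (R := ℝ) (φ := fun _ : Fin 4 => ℝ) i).intervalIntegral_comp_comm hvint).symm
      rw [hf]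
      have : (∫ u in (0:ℝ)..1, (y μ * h (z - u • y) ν - y ν * h (z - u • y) μ))
          = y μ * (∫ u in (0:ℝ)..1, h (z - u • y) ν) - y ν * (∫ u in (0:ℝ)..1, h (z - u • y) μ) := by
        rw [intervalIntegral.integral_sub ((hint ν).const_mul _) ((hint μ).const_mul _),
          intervalIntegral.integral_const_mul, intervalIntegral.integral_const_mul]
      rw [this]
      simp [hL, hproj ν, hproj μ]
      ring
    have hder : HasFDerivAt (fun z => f z ν μ) (L.comp D) x := by
      rw [hfL]
      exact L.hasFDerivAt.comp x hG
    rw [hder.fderiv]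
    have hDapp : D (Pi.single ν 1) = ∫ t in (0:ℝ)..1, fderiv ℝ h (x - t • y) (Pi.single ν 1) :=
      ContinuousLinearMap.intervalIntegral_apply hDint (Pi.single ν 1)
    have hproj2 : ∀ i : Fin 4,
        (∫ t in (0:ℝ)..1, fderiv ℝ h (x - t • y) (Pi.single ν 1)) i
          = ∫ t in (0:ℝ)..1, fderiv ℝ h (x - t • y) (Pi.single ν 1) i := fun i =>
      ((ContinuousLinearMap.proj (R := ℝ) (φ := fun _ : Fin 4 => ℝ) i).intervalIntegral_comp_comm
        ((contDv _).intervalIntegrable 0 1)).symm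
    simp [ContinuousLinearMap.comp_apply, hDapp, hL, hproj2 ν, hproj2 μ]
    ring
  -- divergence-free part
  have div0 : ∀ t : ℝ, ∑ ν : Fin 4, fderiv ℝ h (x - t • y) (Pi.single ν 1) ν = 0 := by
    intro t
    have := hdiv (x - t • y)
    simpa [comp] using this
  -- the sum with y-weights gives the full directional derivative
  have hysum : ∀ T : (Fin 4 → ℝ) →L[ℝ] (Fin 4 → ℝ), ∑ ν : Fin 4, y ν * T (Pi.single ν 1) μ = T y μ := by
    intro T
    have hy : ∑ ν : Fin 4, y ν • (Pi.single ν 1 : (Fin 4 → ℝ)) = y := by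
      funext j
      simp [Finset.sum_apply, Pi.single_apply]
    conv_rhs => rw [← hy]
    rw [map_sum, Finset.sum_apply]
    simp
  -- FTC part
  have ftc : (∫ t in (0:ℝ)..1, fderiv ℝ h (x - t • y) y) = h x - h (x - y) := by
    have hderiv : ∀ t ∈ Set.uIcc (0:ℝ) 1,
        HasDerivAt (fun t : ℝ => h (x - t • y)) (fderiv ℝ h (x - t • y) (-y)) t := by
      intro t _
      have ht : HasDerivAt (fun t : ℝ => x - t • y) (-y) t := by
        simpa using ((hasDerivAt_id t).smul_const y).const_sub x
      exact (hd (x - t • y)).hasFDerivAt.comp_hasDerivAt t ht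
    have hint : IntervalIntegrable (fun t : ℝ => fderiv ℝ h (x - t • y) (-y)) volume 0 1 :=
      (contDv (-y)).intervalIntegrable 0 1
    have := intervalIntegral.integral_eq_sub_of_hasDerivAt hderiv hint
    have hneg : (∫ t in (0:ℝ)..1, fderiv ℝ h (x - t • y) (-y))
        = -∫ t in (0:ℝ)..1, fderiv ℝ h (x - t • y) y := by
      rw [← intervalIntegral.integral_neg]
      congr 1; funext t; simp
    rw [hneg] at this
    have h2 : -(∫ t in (0:ℝ)..1, fderiv ℝ h (x - t • y) y) = h (x - y) - h x := by
      simpa using this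
    have := congrArg Neg.neg h2
    simpa [neg_sub] using this
  -- assemble
  have sum1 : ∑ ν : Fin 4, (∫ t in (0:ℝ)..1, fderiv ℝ h (x - t • y) (Pi.single ν 1) ν) = 0 := by
    rw [← intervalIntegral.integral_finset_sum]
    · simp [div0]
    · intro ν _
      exact (contDvi _ _).intervalIntegrable 0 1
  have sum2 : ∑ ν : Fin 4, y ν * (∫ t in (0:ℝ)..1, fderiv ℝ h (x - t • y) (Pi.single ν 1) μ)
      = h x μ - h (x - y) μ := by
    have : ∑ ν : Fin 4, y ν * (∫ t in (0:ℝ)..1, fderiv ℝ h (x - t • y) (Pi.single ν 1) μ)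
        = ∫ t in (0:ℝ)..1, ∑ ν : Fin 4, y ν * fderiv ℝ h (x - t • y) (Pi.single ν 1) μ := by
      rw [intervalIntegral.integral_finset_sum]
      · congr 1; funext ν
        rw [intervalIntegral.integral_const_mul]
      · intro ν _
        exact ((contDvi _ _).intervalIntegrable 0 1).const_mul _
    rw [this]
    have : (∫ t in (0:ℝ)..1, ∑ ν : Fin 4, y ν * fderiv ℝ h (x - t • y) (Pi.single ν 1) μ)
        = ∫ t in (0:ℝ)..1, fderiv ℝ h (x - t • y) y μ := by
      congr 1; funext t; exact hysum _
    rw [this]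
    have hproj : (∫ t in (0:ℝ)..1, fderiv ℝ h (x - t • y) y μ)
        = (∫ t in (0:ℝ)..1, fderiv ℝ h (x - t • y) y) μ :=
      (ContinuousLinearMap.proj (R := ℝ) (φ := fun _ : Fin 4 => ℝ) μ).intervalIntegral_comp_comm
        ((contDv y).intervalIntegrable 0 1)
    rw [hproj, ftc]
    simp
  have hsplit : ∑ ν : Fin 4, fderiv ℝ (fun z => f z ν μ) x (Pi.single ν 1)
      = (1/2) * (y μ * (∑ ν : Fin 4, ∫ t in (0:ℝ)..1, fderiv ℝ h (x - t • y) (Pi.single ν 1) ν)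
        - ∑ ν : Fin 4, y ν * ∫ t in (0:ℝ)..1, fderiv ℝ h (x - t • y) (Pi.single ν 1) μ) := by
    simp only [term, mul_sub, Finset.mul_sum, Finset.sum_sub_distrib]
  rw [hsplit, sum1, sum2]; ring
end

section
/- Let s : ℝ⁴ → ℝ be smooth and compactly supported and σ : [0,1]² → ℝ⁴ a smooth singular square (surface). Define f_{s,σ}^{μν}(x) = -(1/2) ∫₀¹∫₀¹ s(x + σ(u,v)) (∂_u σ^μ ∂_v σ^ν - ∂_u σ^ν ∂_v σ^μ)(u,v) du dv. Then the coderivative of f_{s,σ} equals the loop function of the boundary: -2 ∂_ν f_{s,σ}^{νμ} = l_{s,∂σ}^μ, where ∂σ is the boundary loop of σ. -/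
open MeasureTheory intervalIntegral
set_option synthInstance.maxHeartbeats 1000000
set_option maxHeartbeats 1000000

private lemma integrableOn_sq {E : Type*} [NormedAddCommGroup E] {F : ℝ × ℝ → E}
    (hF : Continuous F) :
    IntegrableOn F (Set.Ioc (0:ℝ) 1 ×ˢ Set.Ioc (0:ℝ) 1) :=
  (hF.continuousOn.integrableOn_compact (isCompact_Icc.prod isCompact_Icc)).mono_set
    (Set.prod_mono Set.Ioc_subset_Icc_self Set.Ioc_subset_Icc_self)

private lemma conv_int (F : ℝ × ℝ → ℝ) (hF : Continuous F) :
    (∫ u in (0:ℝ)..1, ∫ v in (0:ℝ)..1, F (u, v)) =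
      ∫ p in Set.Ioc (0:ℝ) 1 ×ˢ Set.Ioc (0:ℝ) 1, F p := by
  have hInt : IntegrableOn F (Set.Ioc (0:ℝ) 1 ×ˢ Set.Ioc (0:ℝ) 1)
      ((volume : Measure ℝ).prod volume) :=
    (Measure.volume_eq_prod ℝ ℝ) ▸ integrableOn_sq hF
  rw [intervalIntegral.integral_of_le zero_le_one]
  simp_rw [intervalIntegral.integral_of_le zero_le_one]
  rw [Measure.volume_eq_prod, setIntegral_prod _ hInt]

private lemma clm_expand (L : (Fin 4 → ℝ) →L[ℝ] ℝ) (y : Fin 4 → ℝ) :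
    ∑ ν : Fin 4, y ν * L (Pi.single ν 1) = L y := by
  have hy : y = ∑ ν : Fin 4, y ν • (Pi.single ν 1 : Fin 4 → ℝ) := by
    funext j
    simp [Pi.single_apply, Finset.sum_ite_eq]
  calc ∑ ν : Fin 4, y ν * L (Pi.single ν 1) = ∑ ν : Fin 4, L (y ν • (Pi.single ν 1 : Fin 4 → ℝ)) := by
        simp [smul_eq_mul]
    _ = L (∑ ν : Fin 4, y ν • (Pi.single ν 1 : Fin 4 → ℝ)) := (map_sum L _ _).symm
    _ = L y := by rw [← hy]

private lemma shift_hasFDerivAt {s : (Fin 4 → ℝ) → ℝ} (hs : Differentiable ℝ s)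
    (c z : Fin 4 → ℝ) : HasFDerivAt (fun w => s (w + c)) (fderiv ℝ s (z + c)) z := by
  have h0 : HasFDerivAt (fun w : Fin 4 → ℝ => w + c) (ContinuousLinearMap.id ℝ _) z :=
    (hasFDerivAt_id z).add_const c
  simpa [Function.comp_def] using (hs (z + c)).hasFDerivAt.comp z h0

/-- Smeared Stokes theorem: for a smooth compactly supported scalar `s` and a smooth singular
square `σ`, the coderivative `-2 ∂_ν f_{s,σ}^{νμ}` of the surface function
`f_{s,σ}^{μν}(x) = -(1/2)∫₀¹∫₀¹ s(x+σ(u,v)) (∂_uσ^μ ∂_vσ^ν - ∂_uσ^ν ∂_vσ^μ) du dv`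
equals the loop function of the boundary `∂σ` of `σ`. -/
theorem stmt_5
    (s : (Fin 4 → ℝ) → ℝ) (hs : ContDiff ℝ (⊤ : ℕ∞) s) (hcs : HasCompactSupport s)
    (σ : ℝ → ℝ → Fin 4 → ℝ) (hσ : ContDiff ℝ (⊤ : ℕ∞) (fun p : ℝ × ℝ => σ p.1 p.2))
    (f : (Fin 4 → ℝ) → Fin 4 → Fin 4 → ℝ)
    (hf : ∀ x μ ν, f x μ ν =
      -(1/2) * ∫ u in (0:ℝ)..1, ∫ v in (0:ℝ)..1,
        s (x + σ u v) *
          (deriv (fun a => σ a v μ) u * deriv (fun b => σ u b ν) v -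
           deriv (fun a => σ a v ν) u * deriv (fun b => σ u b μ) v)) :
    ∀ (x : Fin 4 → ℝ) (μ : Fin 4),
      (-2) * ∑ ν : Fin 4, fderiv ℝ (fun z => f z ν μ) x (Pi.single ν 1)
        = (∫ u in (0:ℝ)..1, s (x + σ u 0) * deriv (fun a => σ a 0 μ) u)
          + (∫ v in (0:ℝ)..1, s (x + σ 1 v) * deriv (fun b => σ 1 b μ) v)
          - (∫ u in (0:ℝ)..1, s (x + σ u 1) * deriv (fun a => σ a 1 μ) u)
          - (∫ v in (0:ℝ)..1, s (x + σ 0 v) * deriv (fun b => σ 0 b μ) v) := by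
  intro x μ
  set Φ : ℝ × ℝ → (Fin 4 → ℝ) := fun p => σ p.1 p.2 with hΦdef
  have hΦc : Continuous Φ := hσ.continuous
  have hΦd : Differentiable ℝ Φ := hσ.differentiable (by simp)
  set D : ℝ × ℝ → (ℝ × ℝ) →L[ℝ] (Fin 4 → ℝ) := fderiv ℝ Φ with hDdef
  have hDC : ContDiff ℝ (⊤ : ℕ∞) D := hσ.fderiv_right (by simp)
  have hDc : Continuous D := hDC.continuous
  have hDd : Differentiable ℝ D := hDC.differentiable (by simp)
  have hsd : Differentiable ℝ s := hs.differentiable (by simp)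
  have hs'c : Continuous (fderiv ℝ s) := hs.continuous_fderiv (by simp)
  -- partial derivatives as directional derivatives of Φ
  have hL1 : ∀ (u v : ℝ) (ν : Fin 4), HasDerivAt (fun a => σ a v ν) (D (u, v) (1, 0) ν) u := by
    intro u v ν
    have h1 : HasFDerivAt Φ (D (u, v)) (u, v) := (hΦd (u, v)).hasFDerivAt
    have h2 : HasDerivAt (fun a : ℝ => ((a, v) : ℝ × ℝ)) ((1:ℝ), (0:ℝ)) u :=
      (hasDerivAt_id u).prodMk (hasDerivAt_const u v)
    have h3 : HasDerivAt (fun a => Φ (a, v)) (D (u, v) (1, 0)) u := by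
      have := h1.comp_hasDerivAt u h2; exact this
    have h4 := ((ContinuousLinearMap.proj (R := ℝ) (φ := fun _ : Fin 4 => ℝ)
      ν).hasFDerivAt).comp_hasDerivAt u h3
    simpa [hΦdef, Function.comp_def] using h4
  have hL2 : ∀ (u v : ℝ) (ν : Fin 4), HasDerivAt (fun b => σ u b ν) (D (u, v) (0, 1) ν) v := by
    intro u v ν
    have h1 : HasFDerivAt Φ (D (u, v)) (u, v) := (hΦd (u, v)).hasFDerivAt
    have h2 : HasDerivAt (fun b : ℝ => ((u, b) : ℝ × ℝ)) ((0:ℝ), (1:ℝ)) v :=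
      (hasDerivAt_const v u).prodMk (hasDerivAt_id v)
    have h3 : HasDerivAt (fun b => Φ (u, b)) (D (u, v) (0, 1)) v := h1.comp_hasDerivAt v h2
    have h4 := ((ContinuousLinearMap.proj (R := ℝ) (φ := fun _ : Fin 4 => ℝ)
      ν).hasFDerivAt).comp_hasDerivAt v h3
    simpa [hΦdef, Function.comp_def] using h4
  have hd1 : ∀ (u v : ℝ) (ν : Fin 4), deriv (fun a => σ a v ν) u = D (u, v) (1, 0) ν :=
    fun u v ν => (hL1 u v ν).deriv
  have hd2 : ∀ (u v : ℝ) (ν : Fin 4), deriv (fun b => σ u b ν) v = D (u, v) (0, 1) ν :=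
    fun u v ν => (hL2 u v ν).deriv
  set W : Fin 4 → ℝ × ℝ → ℝ :=
    fun ν p => D p (1, 0) ν * D p (0, 1) μ - D p (1, 0) μ * D p (0, 1) ν with hWdef
  have h10c : Continuous fun p : ℝ × ℝ => D p ((1:ℝ), (0:ℝ)) := hDc.clm_apply continuous_const
  have h01c : Continuous fun p : ℝ × ℝ => D p ((0:ℝ), (1:ℝ)) := hDc.clm_apply continuous_const
  have hWc : ∀ ν, Continuous (W ν) := by
    intro ν
    exact (((continuous_apply ν).comp h10c).mul ((continuous_apply μ).comp h01c)).sub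
      (((continuous_apply μ).comp h10c).mul ((continuous_apply ν).comp h01c))
  set S : Set (ℝ × ℝ) := Set.Ioc (0:ℝ) 1 ×ˢ Set.Ioc (0:ℝ) 1 with hSdef
  have hIf : ∀ (ν : Fin 4) (z : Fin 4 → ℝ),
      f z ν μ = -(1/2) * ∫ p in S, s (z + Φ p) * W ν p := by
    intro ν z
    have hcont : Continuous fun p => s (z + Φ p) * W ν p :=
      ((hs.continuous).comp (continuous_const.add hΦc)).mul (hWc ν)
    rw [hf z ν μ, ← conv_int _ hcont]
    simp only [hd1, hd2, hΦdef, hWdef]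
  -- bound on fderiv s
  obtain ⟨K, hK⟩ := (hcs.fderiv (𝕜 := ℝ)).exists_bound_of_continuous hs'c
  -- differentiation under the integral sign
  have deriv_key : ∀ ν : Fin 4, HasFDerivAt (fun z => ∫ p in S, s (z + Φ p) * W ν p)
      (∫ p in S, W ν p • fderiv ℝ s (x + Φ p)) x := by
    intro ν
    have hF'c : Continuous fun p => W ν p • fderiv ℝ s (x + Φ p) :=
      (hWc ν).smul (hs'c.comp (continuous_const.add hΦc))
    refine hasFDerivAt_integral_of_dominated_of_fderiv_le
      (F := fun z p => s (z + Φ p) * W ν p)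
      (F' := fun z p => W ν p • fderiv ℝ s (z + Φ p))
      (bound := fun p => |W ν p| * K) (s := Set.univ) Filter.univ_mem ?_ ?_ ?_ ?_ ?_ ?_
    · exact Filter.Eventually.of_forall fun z =>
        ((((hs.continuous).comp (continuous_const.add hΦc)).mul (hWc ν))).aestronglyMeasurable
    · exact integrableOn_sq (((hs.continuous).comp (continuous_const.add hΦc)).mul (hWc ν))
    · exact hF'c.aestronglyMeasurable
    · refine Filter.Eventually.of_forall fun p => fun z _ => ?_
      have hns : ‖W ν p • fderiv ℝ s (z + Φ p)‖ = ‖W ν p‖ * ‖fderiv ℝ s (z + Φ p)‖ :=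
        norm_smul (β := (Fin 4 → ℝ) →L[ℝ] ℝ) _ _
      rw [hns, Real.norm_eq_abs]
      exact mul_le_mul_of_nonneg_left (hK _) (abs_nonneg _)
    · exact integrableOn_sq ((hWc ν).abs.mul continuous_const)
    · exact Filter.Eventually.of_forall fun p => fun z _ =>
        (shift_hasFDerivAt hsd (Φ p) z).mul_const (W ν p)
  have hF'int : ∀ ν : Fin 4, IntegrableOn (fun p => W ν p • fderiv ℝ s (x + Φ p)) S :=
    fun ν => integrableOn_sq ((hWc ν).smul (hs'c.comp (continuous_const.add hΦc)))
  -- value of each derivative term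
  have hfd : ∀ ν : Fin 4, fderiv ℝ (fun z => f z ν μ) x (Pi.single ν 1)
      = -(1/2) * ∫ p in S, W ν p * fderiv ℝ s (x + Φ p) (Pi.single ν 1) := by
    intro ν
    have heq : (fun z => f z ν μ) = fun z => -(1/2) * ∫ p in S, s (z + Φ p) * W ν p :=
      funext fun z => hIf ν z
    rw [heq, (((deriv_key ν).const_mul (-(1/2))).fderiv)]
    rw [ContinuousLinearMap.smul_apply, ContinuousLinearMap.integral_apply (hF'int ν)]
    simp only [ContinuousLinearMap.smul_apply, smul_eq_mul]
  -- sum over ν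
  have hs2c : Continuous fun p : ℝ × ℝ => s (x + Φ p) := hs.continuous.comp (continuous_const.add hΦc)
  have hs'comp : Continuous fun p : ℝ × ℝ => fderiv ℝ s (x + Φ p) :=
    hs'c.comp (continuous_const.add hΦc)
  have hInt1 : ∀ ν : Fin 4,
      IntegrableOn (fun p => W ν p * fderiv ℝ s (x + Φ p) (Pi.single ν 1)) S :=
    fun ν => integrableOn_sq ((hWc ν).mul (hs'comp.clm_apply continuous_const))
  have sum_key : ∑ ν : Fin 4, ∫ p in S, W ν p * fderiv ℝ s (x + Φ p) (Pi.single ν 1)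
      = ∫ p in S, (fderiv ℝ s (x + Φ p) (D p (1, 0)) * D p (0, 1) μ
          - fderiv ℝ s (x + Φ p) (D p (0, 1)) * D p (1, 0) μ) := by
    rw [← integral_finset_sum _ (fun ν _ => hInt1 ν)]
    congr 1
    funext p
    calc ∑ ν : Fin 4, W ν p * fderiv ℝ s (x + Φ p) (Pi.single ν 1)
        = (∑ ν : Fin 4, D p (1, 0) ν * fderiv ℝ s (x + Φ p) (Pi.single ν 1)) * D p (0, 1) μ
          - (∑ ν : Fin 4, D p (0, 1) ν * fderiv ℝ s (x + Φ p) (Pi.single ν 1)) * D p (1, 0) μ := by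
          rw [Finset.sum_mul, Finset.sum_mul, ← Finset.sum_sub_distrib]
          exact Finset.sum_congr rfl fun ν _ => by simp only [hWdef]; ring
      _ = _ := by rw [clm_expand, clm_expand]
  -- divergence theorem setup
  set ev : ℝ × ℝ → ((ℝ × ℝ) →L[ℝ] (Fin 4 → ℝ)) →L[ℝ] ℝ := fun w =>
    (ContinuousLinearMap.proj (R := ℝ) (φ := fun _ : Fin 4 => ℝ) μ).comp
      (ContinuousLinearMap.apply ℝ (Fin 4 → ℝ) w) with hevdef
  set P : ℝ × ℝ → ℝ := fun p => s (x + Φ p) * D p (0, 1) μ with hPdef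
  set Q : ℝ × ℝ → ℝ := fun p => -(s (x + Φ p) * D p (1, 0) μ) with hQdef
  set P' : ℝ × ℝ → (ℝ × ℝ) →L[ℝ] ℝ := fun p =>
    s (x + Φ p) • ((ev (0, 1)).comp (fderiv ℝ D p))
      + (D p (0, 1) μ) • ((fderiv ℝ s (x + Φ p)).comp (D p)) with hP'def
  set Q' : ℝ × ℝ → (ℝ × ℝ) →L[ℝ] ℝ := fun p =>
    -(s (x + Φ p) • ((ev (1, 0)).comp (fderiv ℝ D p))
      + (D p (1, 0) μ) • ((fderiv ℝ s (x + Φ p)).comp (D p))) with hQ'def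
  have hG : ∀ p : ℝ × ℝ, HasFDerivAt (fun q => s (x + Φ q)) ((fderiv ℝ s (x + Φ p)).comp (D p)) p := by
    intro p
    have h0 : HasFDerivAt (fun q => x + Φ q) (D p) p := (hΦd p).hasFDerivAt.const_add x
    exact (hsd (x + Φ p)).hasFDerivAt.comp p h0
  have hEV : ∀ (w : ℝ × ℝ) (p : ℝ × ℝ),
      HasFDerivAt (fun q => D q w μ) ((ev w).comp (fderiv ℝ D p)) p := by
    intro w p
    exact (ev w).hasFDerivAt.comp p (hDd p).hasFDerivAt
  have hP : ∀ p : ℝ × ℝ, HasFDerivAt P (P' p) p := fun p => (hG p).mul (hEV (0, 1) p)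
  have hQ : ∀ p : ℝ × ℝ, HasFDerivAt Q (Q' p) p := fun p => ((hG p).mul (hEV (1, 0) p)).neg
  have hPc : Continuous P := hs2c.mul ((continuous_apply μ).comp h01c)
  have hQc : Continuous Q := (hs2c.mul ((continuous_apply μ).comp h10c)).neg
  have hRc : Continuous fun p : ℝ × ℝ =>
      fderiv ℝ s (x + Φ p) (D p (1, 0)) * D p (0, 1) μ
        - fderiv ℝ s (x + Φ p) (D p (0, 1)) * D p (1, 0) μ :=
    ((hs'comp.clm_apply h10c).mul ((continuous_apply μ).comp h01c)).sub
      ((hs'comp.clm_apply h01c).mul ((continuous_apply μ).comp h10c))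
  have hR : ∀ p : ℝ × ℝ, P' p (1, 0) + Q' p (0, 1) =
      fderiv ℝ s (x + Φ p) (D p (1, 0)) * D p (0, 1) μ
        - fderiv ℝ s (x + Φ p) (D p (0, 1)) * D p (1, 0) μ := by
    intro p
    have hsymm : fderiv ℝ D p (1, 0) (0, 1) μ = fderiv ℝ D p (0, 1) (1, 0) μ := by
      have h := (hσ.contDiffAt (x := p)).isSymmSndFDerivAt (by rw [minSmoothness_of_isRCLikeNormedField]; exact (WithTop.coe_ofNat (α := ℕ∞) 2) ▸ WithTop.coe_le_coe.mpr (le_top : (2:ℕ∞) ≤ ⊤)) (1, 0) (0, 1)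
      exact congrFun h μ
    simp only [hP'def, hQ'def, hevdef, ContinuousLinearMap.add_apply,
      ContinuousLinearMap.smul_apply, ContinuousLinearMap.comp_apply,
      ContinuousLinearMap.neg_apply, ContinuousLinearMap.proj_apply,
      ContinuousLinearMap.apply_apply, smul_eq_mul]
    rw [hsymm]; ring
  have Hi : IntegrableOn (fun p : ℝ × ℝ => P' p (1, 0) + Q' p (0, 1))
      (Set.uIcc (0:ℝ) 1 ×ˢ Set.uIcc (0:ℝ) 1) := by
    have : (fun p : ℝ × ℝ => P' p (1, 0) + Q' p (0, 1)) = fun p : ℝ × ℝ =>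
        fderiv ℝ s (x + Φ p) (D p (1, 0)) * D p (0, 1) μ
          - fderiv ℝ s (x + Φ p) (D p (0, 1)) * D p (1, 0) μ := funext hR
    rw [this]
    exact hRc.continuousOn.integrableOn_compact (isCompact_uIcc.prod isCompact_uIcc)
  have div := integral2_divergence_prod_of_hasFDerivAt_off_countable P Q P' Q'
    0 0 1 1 ∅ Set.countable_empty hPc.continuousOn hQc.continuousOn
    (fun p _ => hP p) (fun p _ => hQ p) Hi
  -- put everything together
  have conv2 := conv_int (fun p => P' p (1, 0) + Q' p (0, 1))
    (by rw [funext hR]; exact hRc)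
  simp only [hR] at conv2
  calc (-2) * ∑ ν : Fin 4, fderiv ℝ (fun z => f z ν μ) x (Pi.single ν 1)
      = ∑ ν : Fin 4, ∫ p in S, W ν p * fderiv ℝ s (x + Φ p) (Pi.single ν 1) := by
        simp only [hfd]; rw [← Finset.mul_sum, ← mul_assoc]; norm_num
    _ = ∫ p in S, (fderiv ℝ s (x + Φ p) (D p (1, 0)) * D p (0, 1) μ
          - fderiv ℝ s (x + Φ p) (D p (0, 1)) * D p (1, 0) μ) := sum_key
    _ = ∫ u in (0:ℝ)..1, ∫ v in (0:ℝ)..1, (P' (u, v) (1, 0) + Q' (u, v) (0, 1)) := by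
        rw [← conv2]
        simp only [hR]
    _ = (((∫ u in (0:ℝ)..1, Q (u, 1)) - ∫ u in (0:ℝ)..1, Q (u, 0))
          + ∫ v in (0:ℝ)..1, P (1, v)) - ∫ v in (0:ℝ)..1, P (0, v) := div
    _ = _ := by
        simp only [hPdef, hQdef, hd1, hd2, intervalIntegral.integral_neg, hΦdef]
        ring
end
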